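/- Under Assumption (A), for any families of weighting vectors v_n, w_n ∈ ℝ^{d_n} with sup_n ‖v_n‖₁ < ∞ and sup_n ‖w_n‖₁ < ∞, there exists a constant C (depending on the weighting vectors only through their ℓ1-norms) such that for all n' = 1, 2, …: sup_{n ∈ ℕ} Σ_{i=1}^∞ Σ_{l=0}^∞ ( f̃_{l,i}^{(n)}(v_n,w_n) − f̃_{l,i+n'}^{(n)}(v_n,w_n) )² ≤ C (n')^{1−θ}. -/

import Mathlib

/-!
Write `p = 3/4 + θ/2`, so that (A) gives `|f_{l,j}| ≤ B j^{-p} (j+l)^{-p}` with `B` a multiple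
of `‖v‖₁ ‖w‖₁`. The difference `f̃_{l,i} - f̃_{l,i+n'}` is the finite sum `Σ_{m<n'} f_{l,i+m}`,
hence at most `B S_i (i+l)^{-p}` with `S_i = Σ_{m<n'} (i+m)^{-p}`, and summing its square over `l`
costs a factor `i^{1-2p}`. Both `S_i ≤ n' i^{-p}` and `S_i ≤ n'^{1-p}/(1-p)` hold; interpolating
them with weights `1/(2p)` and `2 - 1/(2p)` turns the `i`-th term into
`n'^{5/2-2p} i^{1/2-2p} = n'^{1-θ} i^{-1-θ}`, which is summable in `i`.
-/

open MeasureTheory Filter Finset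

noncomputable section

/-- The bilinear coefficient functionals `f_{l,j}^{(n)}(v,w)`. -/
def fCoef (d : ℕ → ℕ) (c : ℕ → ℕ → ℕ → ℝ) (n : ℕ) (v w : ℕ → ℝ) (l j : ℕ) : ℝ :=
  if l = 0 then
    ∑ ν ∈ Finset.range (d n), ∑ μ ∈ Finset.range (d n), v ν * w μ * (c n ν j * c n μ j)
  else
    ∑ ν ∈ Finset.range (d n), ∑ μ ∈ Finset.range (d n),
      v ν * w μ * (c n ν j * c n μ (j + l) + c n μ j * c n ν (j + l))

/-- `f̃_{l,i}^{(n)}(v,w) = Σ_{j=i}^∞ f_{l,j}^{(n)}(v,w)`. -/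
def ftil (d : ℕ → ℕ) (c : ℕ → ℕ → ℕ → ℝ) (n : ℕ) (v w : ℕ → ℝ) (l i : ℕ) : ℝ :=
  ∑' j : ℕ, fCoef d c n v w l (i + j)

/-- Assumption (A): `sup_n max_{1≤ν≤d_n} |c_{nj}^{(ν)}|² ≤ C₀ (j ∨ 1)^{−3/2−θ}`. -/
def AssumptionA (d : ℕ → ℕ) (c : ℕ → ℕ → ℕ → ℝ) (θ : ℝ) : Prop :=
  ∃ C₀ > (0 : ℝ), ∀ n j : ℕ, ∀ ν < d n,
    (c n ν j) ^ 2 ≤ C₀ * ((max j 1 : ℕ) : ℝ) ^ (-(3 / 2 : ℝ) - θ)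

open Real

lemma mul_add_one_rpow_sub_one_le_sub {t x : ℝ} (ht0 : 0 ≤ t) (ht1 : t ≤ 1) (hx : 0 ≤ x) :
    t * (x + 1) ^ (t - 1) ≤ (x + 1) ^ t - x ^ t := by
  have hx1 : 0 < x + 1 := by linarith
  have hratio : x / (x + 1) = 1 + -(x + 1)⁻¹ := by field_simp; ring
  have hbernoulli : (x / (x + 1)) ^ t ≤ 1 + t * -(x + 1)⁻¹ := by
    rw [hratio]
    exact rpow_one_add_le_one_add_mul_self
      (by linarith [inv_le_one_of_one_le₀ (by linarith : (1 : ℝ) ≤ x + 1)]) ht0 ht1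
  have hsplit : x ^ t = (x + 1) ^ t * (x / (x + 1)) ^ t := by
    rw [← mul_rpow hx1.le (by positivity), mul_div_cancel₀ x hx1.ne']
  calc t * (x + 1) ^ (t - 1) = (x + 1) ^ t - (x + 1) ^ t * (1 + t * -(x + 1)⁻¹) := by
        rw [rpow_sub_one hx1.ne']; ring
    _ ≤ (x + 1) ^ t - x ^ t := by
        rw [hsplit]; gcongr

lemma sum_range_rpow_sub_one_le {t : ℝ} (ht0 : 0 < t) (ht1 : t ≤ 1) (N : ℕ) :
    ∑ m ∈ range N, ((m : ℝ) + 1) ^ (t - 1) ≤ (N : ℝ) ^ t / t := by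
  rw [le_div_iff₀ ht0, sum_mul]
  calc ∑ m ∈ range N, ((m : ℝ) + 1) ^ (t - 1) * t
      ≤ ∑ m ∈ range N, (((m + 1 : ℕ) : ℝ) ^ t - (m : ℝ) ^ t) := by
        gcongr with m
        push_cast
        linarith [mul_add_one_rpow_sub_one_le_sub ht0.le ht1 m.cast_nonneg]
    _ = (N : ℝ) ^ t := by
        rw [sum_range_sub (fun m : ℕ => (m : ℝ) ^ t)]
        simp [zero_rpow ht0.ne']

lemma half_mul_rpow_neg_le_sub {s x : ℝ} (hs0 : 0 ≤ s) (hs1 : s ≤ 1) (hx : 1 ≤ x) :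
    s / 2 * x ^ (-(1 + s)) ≤ x ^ (-s) - (x + 1) ^ (-s) := by
  have hx0 : 0 < x := by linarith
  have hconc := mul_add_one_rpow_sub_one_le_sub hs0 hs1 hx0.le
  rw [rpow_sub_one (by positivity)] at hconc
  have hB : 0 < (x + 1) ^ s := rpow_pos_of_pos (by positivity) s
  have hcross : s / 2 * (x + 1) ^ s ≤ x * ((x + 1) ^ s - x ^ s) := by
    rw [mul_div_assoc', div_le_iff₀ (by positivity)] at hconc
    have hBA : 0 ≤ (x + 1) ^ s - x ^ s := by nlinarith [mul_nonneg hs0 hB.le]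
    nlinarith [mul_le_mul_of_nonneg_right hx hBA]
  rw [neg_add, rpow_add hx0, rpow_neg_one, rpow_neg hx0.le, rpow_neg (by positivity), ← sub_nonneg]
  have hdiff : (x ^ s)⁻¹ - ((x + 1) ^ s)⁻¹ - s / 2 * (x⁻¹ * (x ^ s)⁻¹)
      = (x * ((x + 1) ^ s - x ^ s) - s / 2 * (x + 1) ^ s) / (x * x ^ s * (x + 1) ^ s) := by
    field_simp
  rw [hdiff]
  exact div_nonneg (by linarith) (by positivity)

lemma summable_natCast_add_rpow (i : ℕ) {q : ℝ} (hq : q < -1) :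
    Summable fun m : ℕ => ((i : ℝ) + m) ^ q := by
  simpa [add_comm] using (summable_nat_add_iff i).mpr (Real.summable_nat_rpow.mpr hq)

lemma tsum_natCast_add_rpow_le {s : ℝ} (hs0 : 0 < s) (hs1 : s ≤ 1) {i : ℕ} (hi : 1 ≤ i) :
    ∑' m : ℕ, ((i : ℝ) + m) ^ (-(1 + s)) ≤ 2 / s * (i : ℝ) ^ (-s) := by
  refine tsum_le_of_sum_range_le (fun m => by positivity) fun N => ?_
  have hi' : (1 : ℝ) ≤ i := by exact_mod_cast hi
  calc ∑ m ∈ range N, ((i : ℝ) + m) ^ (-(1 + s))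
      ≤ ∑ m ∈ range N, 2 / s * (((i : ℝ) + m) ^ (-s) - ((i : ℝ) + (m + 1 : ℕ)) ^ (-s)) := by
        gcongr with m
        have hm : (1 : ℝ) ≤ i + m := by linarith [m.cast_nonneg (α := ℝ)]
        have hstep := half_mul_rpow_neg_le_sub hs0.le hs1 hm
        rw [Nat.cast_succ, ← add_assoc, div_mul_eq_mul_div, le_div_iff₀ hs0]
        linarith
    _ = 2 / s * ((i : ℝ) ^ (-s) - ((i : ℝ) + N) ^ (-s)) := by
        rw [← mul_sum, sum_range_sub' (fun m : ℕ => ((i : ℝ) + m) ^ (-s))]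
        simp
    _ ≤ 2 / s * (i : ℝ) ^ (-s) := by
        gcongr
        exact sub_le_self _ (by positivity)

lemma sq_le_rpow_mul_rpow_of_le {S x y a : ℝ} (hS : 0 ≤ S) (hx : S ≤ x) (hy : S ≤ y)
    (ha0 : 0 ≤ a) (ha2 : a ≤ 2) : S ^ 2 ≤ x ^ a * y ^ (2 - a) := by
  calc S ^ 2 = S ^ a * S ^ (2 - a) := by
        rw [← rpow_add' hS (by norm_num), add_sub_cancel, rpow_two]
    _ ≤ x ^ a * y ^ (2 - a) :=
        mul_le_mul (rpow_le_rpow hS hx ha0) (rpow_le_rpow hS hy (by linarith))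
          (by positivity) (rpow_nonneg (hS.trans hx) a)

lemma sum_range_natCast_add_rpow_neg_le_mul {p : ℝ} (hp : 0 ≤ p) (n : ℕ) {i : ℕ} (hi : 1 ≤ i) :
    ∑ m ∈ range n, ((i : ℝ) + m) ^ (-p) ≤ n * (i : ℝ) ^ (-p) := by
  have hi' : (1 : ℝ) ≤ i := by exact_mod_cast hi
  calc ∑ m ∈ range n, ((i : ℝ) + m) ^ (-p) ≤ ∑ m ∈ range n, (i : ℝ) ^ (-p) :=
        sum_le_sum fun m _ => rpow_le_rpow_of_nonpos (by linarith) (by simp) (by linarith)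
    _ = n * (i : ℝ) ^ (-p) := by simp

lemma sum_range_natCast_add_rpow_neg_le {p : ℝ} (hp0 : 0 ≤ p) (hp1 : p < 1) (n : ℕ) {i : ℕ}
    (hi : 1 ≤ i) : ∑ m ∈ range n, ((i : ℝ) + m) ^ (-p) ≤ (n : ℝ) ^ (1 - p) / (1 - p) := by
  have hi' : (1 : ℝ) ≤ i := by exact_mod_cast hi
  calc ∑ m ∈ range n, ((i : ℝ) + m) ^ (-p) ≤ ∑ m ∈ range n, ((m : ℝ) + 1) ^ ((1 - p) - 1) := by
        gcongr with m
        rw [sub_sub_cancel_left]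
        exact rpow_le_rpow_of_nonpos (by positivity) (by linarith) (by linarith)
    _ ≤ (n : ℝ) ^ (1 - p) / (1 - p) := sum_range_rpow_sub_one_le (by linarith) (by linarith) n

lemma tsum_nat_add_sub_tsum_nat_add {G : Type*} [AddCommGroup G] [TopologicalSpace G]
    [IsTopologicalAddGroup G] [T2Space G] {f : ℕ → G} {i : ℕ} (hf : Summable fun m => f (i + m))
    (n : ℕ) : ∑' m, f (i + m) - ∑' m, f (i + n + m) = ∑ m ∈ range n, f (i + m) := by
  rw [← hf.sum_add_tsum_nat_add n, add_sub_assoc, add_eq_left, sub_eq_zero]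
  exact tsum_congr fun m => by rw [add_assoc, add_comm m]

def HasProductDecay (F : ℕ → ℕ → ℝ) (B p : ℝ) : Prop :=
  ∀ l j, 1 ≤ j → |F l j| ≤ B * ((j : ℝ) ^ (-p) * ((j : ℝ) + l) ^ (-p))

namespace HasProductDecay

variable {F : ℕ → ℕ → ℝ} {B p : ℝ}

lemma nonneg (hF : HasProductDecay F B p) : 0 ≤ B := by
  simpa using (abs_nonneg _).trans (hF 0 1 le_rfl)

lemma mono {B' : ℝ} (hF : HasProductDecay F B p) (hB : B ≤ B') : HasProductDecay F B' p :=
  fun l j hj => (hF l j hj).trans (by gcongr)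

lemma abs_le_mul_rpow (hF : HasProductDecay F B p) (hp : 0 ≤ p) {l j : ℕ} {x : ℝ} (hj : 1 ≤ j)
    (hx0 : 0 < x) (hx : x ≤ j + l) : |F l j| ≤ B * ((j : ℝ) ^ (-p) * x ^ (-p)) :=
  (hF l j hj).trans <| mul_le_mul_of_nonneg_left
    (mul_le_mul_of_nonneg_left (rpow_le_rpow_of_nonpos hx0 hx (by linarith)) (by positivity))
    hF.nonneg

lemma summable_tail (hF : HasProductDecay F B p) (hp : 1 / 2 < p) (l : ℕ) {i : ℕ}
    (hi : 1 ≤ i) : Summable fun m => F l (i + m) := by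
  refine Summable.of_norm_bounded
    ((summable_natCast_add_rpow i (q := -(2 * p)) (by linarith)).mul_left B) fun m => ?_
  have him : (0 : ℝ) < i + m := by positivity
  calc ‖F l (i + m)‖ ≤ B * (((i + m : ℕ) : ℝ) ^ (-p) * ((i + m : ℕ) : ℝ) ^ (-p)) :=
        hF.abs_le_mul_rpow (by linarith) (by omega) (by simpa using him) (by simp)
    _ = B * ((i : ℝ) + m) ^ (-(2 * p)) := by
        rw [← rpow_add (by simpa using him)]
        push_cast
        ring_nf

lemma abs_sum_range_le (hF : HasProductDecay F B p) (hp : 0 ≤ p) (l n : ℕ) {i : ℕ}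
    (hi : 1 ≤ i) :
    |∑ m ∈ range n, F l (i + m)|
      ≤ B * (∑ m ∈ range n, ((i : ℝ) + m) ^ (-p)) * ((i : ℝ) + l) ^ (-p) := by
  rw [mul_sum, sum_mul]
  refine (abs_sum_le_sum_abs _ _).trans (sum_le_sum fun m _ => ?_)
  calc |F l (i + m)| ≤ B * (((i + m : ℕ) : ℝ) ^ (-p) * ((i : ℝ) + l) ^ (-p)) :=
        hF.abs_le_mul_rpow hp (by omega) (by positivity)
          (by push_cast; linarith [m.cast_nonneg (α := ℝ)])
    _ = B * ((i : ℝ) + m) ^ (-p) * ((i : ℝ) + l) ^ (-p) := by push_cast; ring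

lemma tsum_sq_sum_range_le (hF : HasProductDecay F B p) (hp : 1 / 2 < p) (hp1 : p ≤ 1)
    (n : ℕ) {i : ℕ} (hi : 1 ≤ i) :
    ∑' l, (∑ m ∈ range n, F l (i + m)) ^ 2
      ≤ (B * ∑ m ∈ range n, ((i : ℝ) + m) ^ (-p)) ^ 2
          * (2 / (2 * p - 1) * (i : ℝ) ^ (-(2 * p - 1))) := by
  set S := ∑ m ∈ range n, ((i : ℝ) + m) ^ (-p)
  have hi' : (1 : ℝ) ≤ i := by exact_mod_cast hi
  have hterm : ∀ l : ℕ, (∑ m ∈ range n, F l (i + m)) ^ 2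
      ≤ (B * S) ^ 2 * ((i : ℝ) + l) ^ (-(1 + (2 * p - 1))) := by
    intro l
    have hpos : (0 : ℝ) ≤ (i : ℝ) + l := by positivity
    calc (∑ m ∈ range n, F l (i + m)) ^ 2 = |∑ m ∈ range n, F l (i + m)| ^ 2 := (sq_abs _).symm
      _ ≤ (B * S * ((i : ℝ) + l) ^ (-p)) ^ 2 :=
          pow_le_pow_left₀ (abs_nonneg _) (hF.abs_sum_range_le (by linarith) l n hi) 2
      _ = (B * S) ^ 2 * ((i : ℝ) + l) ^ (-(1 + (2 * p - 1))) := by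
          rw [mul_pow, ← rpow_mul_natCast hpos]
          ring_nf
  have hsum : Summable fun l : ℕ => (B * S) ^ 2 * ((i : ℝ) + l) ^ (-(1 + (2 * p - 1))) :=
    (summable_natCast_add_rpow i (by linarith)).mul_left _
  calc ∑' l, (∑ m ∈ range n, F l (i + m)) ^ 2
      ≤ ∑' l : ℕ, (B * S) ^ 2 * ((i : ℝ) + l) ^ (-(1 + (2 * p - 1))) :=
        (Summable.of_nonneg_of_le (fun _ => sq_nonneg _) hterm hsum).tsum_le_tsum hterm hsum
    _ ≤ (B * S) ^ 2 * (2 / (2 * p - 1) * (i : ℝ) ^ (-(2 * p - 1))) := by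
        rw [tsum_mul_left]
        gcongr
        exact tsum_natCast_add_rpow_le (by linarith) (by linarith) hi

lemma tsum_sq_sum_range_le_rpow (hF : HasProductDecay F B p) (hp : 1 / 2 < p) (hp1 : p < 1)
    {n i : ℕ} (hn : 1 ≤ n) (hi : 1 ≤ i) :
    ∑' l, (∑ m ∈ range n, F l (i + m)) ^ 2
      ≤ B ^ 2 * (2 / (2 * p - 1)) / (1 - p) ^ (2 - 1 / (2 * p))
          * (n : ℝ) ^ (5 / 2 - 2 * p) * (i : ℝ) ^ (1 / 2 - 2 * p) := by
  set S := ∑ m ∈ range n, ((i : ℝ) + m) ^ (-p)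
  have hn' : (0 : ℝ) < n := by exact_mod_cast hn
  have hi' : (0 : ℝ) < i := by exact_mod_cast hi
  have hp0 : 0 < p := by linarith
  have hS : S ^ 2 ≤ ((n : ℝ) * (i : ℝ) ^ (-p)) ^ (1 / (2 * p))
      * ((n : ℝ) ^ (1 - p) / (1 - p)) ^ (2 - 1 / (2 * p)) :=
    sq_le_rpow_mul_rpow_of_le (sum_nonneg fun m _ => by positivity)
      (sum_range_natCast_add_rpow_neg_le_mul hp0.le n hi)
      (sum_range_natCast_add_rpow_neg_le hp0.le hp1 n hi) (by positivity)
      (by rw [div_le_iff₀ (by positivity)]; linarith)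
  have hexp : ((n : ℝ) * (i : ℝ) ^ (-p)) ^ (1 / (2 * p))
      * ((n : ℝ) ^ (1 - p) / (1 - p)) ^ (2 - 1 / (2 * p)) * (i : ℝ) ^ (-(2 * p - 1))
      = (n : ℝ) ^ (5 / 2 - 2 * p) * (i : ℝ) ^ (1 / 2 - 2 * p) / (1 - p) ^ (2 - 1 / (2 * p)) := by
    rw [mul_rpow hn'.le (by positivity), div_rpow (by positivity) (by linarith),
      ← rpow_mul hi'.le, ← rpow_mul hn'.le]
    have hn_exp : 5 / 2 - 2 * p = 1 / (2 * p) + (1 - p) * (2 - 1 / (2 * p)) := by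
      field_simp; ring
    have hi_exp : 1 / 2 - 2 * p = -p * (1 / (2 * p)) + -(2 * p - 1) := by
      field_simp; ring
    rw [hn_exp, hi_exp, rpow_add hn', rpow_add hi']
    ring
  calc ∑' l, (∑ m ∈ range n, F l (i + m)) ^ 2
      ≤ (B * S) ^ 2 * (2 / (2 * p - 1) * (i : ℝ) ^ (-(2 * p - 1))) :=
        hF.tsum_sq_sum_range_le hp hp1.le n hi
    _ = B ^ 2 * (2 / (2 * p - 1)) * (S ^ 2 * (i : ℝ) ^ (-(2 * p - 1))) := by ring
    _ ≤ B ^ 2 * (2 / (2 * p - 1)) * (((n : ℝ) * (i : ℝ) ^ (-p)) ^ (1 / (2 * p))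
          * ((n : ℝ) ^ (1 - p) / (1 - p)) ^ (2 - 1 / (2 * p)) * (i : ℝ) ^ (-(2 * p - 1))) := by
        have : 0 < 2 * p - 1 := by linarith
        gcongr
    _ = _ := by rw [hexp]; ring

lemma tsum_tsum_sq_tail_sub_tail_le (hF : HasProductDecay F B p) (hp : 3 / 4 < p) (hp1 : p < 1)
    {n : ℕ} (hn : 1 ≤ n) :
    ∑' i : ℕ, ∑' l : ℕ, (∑' j, F l (i + 1 + j) - ∑' j, F l (i + 1 + n + j)) ^ 2
      ≤ B ^ 2 * (2 / (2 * p - 1)) / (1 - p) ^ (2 - 1 / (2 * p))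
          * (∑' i : ℕ, ((i + 1 : ℕ) : ℝ) ^ (1 / 2 - 2 * p)) * (n : ℝ) ^ (5 / 2 - 2 * p) := by
  set D := B ^ 2 * (2 / (2 * p - 1)) / (1 - p) ^ (2 - 1 / (2 * p))
  have hterm : ∀ i : ℕ, ∑' l : ℕ, (∑' j, F l (i + 1 + j) - ∑' j, F l (i + 1 + n + j)) ^ 2
      ≤ D * (n : ℝ) ^ (5 / 2 - 2 * p) * ((i + 1 : ℕ) : ℝ) ^ (1 / 2 - 2 * p) := by
    intro i
    simp_rw [tsum_nat_add_sub_tsum_nat_add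
      (hF.summable_tail (by linarith) _ (Nat.le_add_left 1 i))]
    exact hF.tsum_sq_sum_range_le_rpow (by linarith) hp1 hn (Nat.le_add_left 1 i)
  have hsum : Summable fun i : ℕ =>
      D * (n : ℝ) ^ (5 / 2 - 2 * p) * ((i + 1 : ℕ) : ℝ) ^ (1 / 2 - 2 * p) :=
    ((summable_nat_add_iff 1).mpr (summable_nat_rpow.mpr (by linarith))).mul_left _
  calc ∑' i : ℕ, ∑' l : ℕ, (∑' j, F l (i + 1 + j) - ∑' j, F l (i + 1 + n + j)) ^ 2
      ≤ ∑' i : ℕ, D * (n : ℝ) ^ (5 / 2 - 2 * p) * ((i + 1 : ℕ) : ℝ) ^ (1 / 2 - 2 * p) :=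
        (Summable.of_nonneg_of_le (fun _ => tsum_nonneg fun _ => sq_nonneg _) hterm hsum
          ).tsum_le_tsum hterm hsum
    _ = D * (∑' i : ℕ, ((i + 1 : ℕ) : ℝ) ^ (1 / 2 - 2 * p)) * (n : ℝ) ^ (5 / 2 - 2 * p) := by
        rw [tsum_mul_left]; ring

end HasProductDecay

lemma abs_sum_sum_mul_mul_le {ι κ : Type*} (s : Finset ι) (t : Finset κ) {v : ι → ℝ}
    {w : κ → ℝ} {X : ι → κ → ℝ} {K : ℝ} (hX : ∀ ν ∈ s, ∀ μ ∈ t, |X ν μ| ≤ K) :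
    |∑ ν ∈ s, ∑ μ ∈ t, v ν * w μ * X ν μ| ≤ (∑ ν ∈ s, |v ν|) * (∑ μ ∈ t, |w μ|) * K := by
  rw [sum_mul_sum, sum_mul]
  refine (abs_sum_le_sum_abs _ _).trans (sum_le_sum fun ν hν => ?_)
  rw [sum_mul]
  refine (abs_sum_le_sum_abs _ _).trans (sum_le_sum fun μ hμ => ?_)
  rw [abs_mul, abs_mul]
  exact mul_le_mul_of_nonneg_left (hX ν hν μ hμ) (by positivity)

lemma abs_fCoef_le {d : ℕ → ℕ} {c : ℕ → ℕ → ℕ → ℝ} {n : ℕ} {g : ℕ → ℝ}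
    (hc : ∀ ν < d n, ∀ j, |c n ν j| ≤ g j) (v w : ℕ → ℝ) (l j : ℕ) :
    |fCoef d c n v w l j|
      ≤ (∑ ν ∈ range (d n), |v ν|) * (∑ μ ∈ range (d n), |w μ|) * (2 * (g j * g (j + l))) := by
  have hprod : ∀ ν ∈ range (d n), ∀ μ ∈ range (d n), ∀ j j',
      |c n ν j * c n μ j'| ≤ g j * g j' := by
    intro ν hν μ hμ j j'
    rw [abs_mul]
    exact mul_le_mul (hc ν (mem_range.1 hν) j) (hc μ (mem_range.1 hμ) j') (abs_nonneg _)
      ((abs_nonneg _).trans (hc ν (mem_range.1 hν) j))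
  unfold fCoef
  split_ifs with hl
  · subst hl
    refine abs_sum_sum_mul_mul_le _ _ fun ν hν μ hμ => ?_
    have hνμ := hprod ν hν μ hμ j j
    rw [add_zero]
    linarith [(abs_nonneg _).trans hνμ]
  · refine abs_sum_sum_mul_mul_le _ _ fun ν hν μ hμ => (abs_add_le _ _).trans ?_
    linarith [hprod ν hν μ hμ j (j + l), hprod μ hμ ν hν j (j + l)]

lemma AssumptionA.exists_hasProductDecay {d : ℕ → ℕ} {c : ℕ → ℕ → ℕ → ℝ} {θ : ℝ}
    (hA : AssumptionA d c θ) :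
    ∃ K, 0 ≤ K ∧ ∀ n (v w : ℕ → ℝ), HasProductDecay (fCoef d c n v w)
      (K * (∑ ν ∈ range (d n), |v ν|) * (∑ μ ∈ range (d n), |w μ|)) (3 / 4 + θ / 2) := by
  obtain ⟨C₀, hC₀, hc⟩ := hA
  refine ⟨2 * C₀, by positivity, fun n v w l j hj => ?_⟩
  have hg : ∀ ν < d n, ∀ j, |c n ν j| ≤ √C₀ * ((max j 1 : ℕ) : ℝ) ^ (-(3 / 4 + θ / 2)) :=
    fun ν hν j => abs_le_of_sq_le_sq ((hc n j ν hν).trans_eq (by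
      rw [mul_pow, sq_sqrt hC₀.le, ← rpow_mul_natCast (Nat.cast_nonneg _)]
      ring_nf)) (by positivity)
  refine (abs_fCoef_le hg v w l j).trans_eq ?_
  rw [max_eq_left hj, max_eq_left (by omega), Nat.cast_add]
  linear_combination (2 * (∑ ν ∈ range (d n), |v ν|) * (∑ μ ∈ range (d n), |w μ|)
    * ((j : ℝ) ^ (-(3 / 4 + θ / 2)) * ((j : ℝ) + l) ^ (-(3 / 4 + θ / 2))))
      * mul_self_sqrt hC₀.le

/-- bound (Ass1) of the technical lemma. -/
theorem stmt0 (d : ℕ → ℕ) (c : ℕ → ℕ → ℕ → ℝ) (θ : ℝ) (hθ0 : 0 < θ) (hθ : θ < 1 / 2)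
    (hA : AssumptionA d c θ) (v w : ℕ → ℕ → ℝ) (Kv Kw : ℝ)
    (hv : ∀ n, ∑ ν ∈ Finset.range (d n), |v n ν| ≤ Kv)
    (hw : ∀ n, ∑ ν ∈ Finset.range (d n), |w n ν| ≤ Kw) :
    ∃ C : ℝ, ∀ n n' : ℕ, 1 ≤ n' →
      ∑' i : ℕ, ∑' l : ℕ,
        (ftil d c n (v n) (w n) l (i + 1) - ftil d c n (v n) (w n) l (i + 1 + n')) ^ 2
        ≤ C * (n' : ℝ) ^ ((1 : ℝ) - θ) := by
  set p : ℝ := 3 / 4 + θ / 2 with hp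
  obtain ⟨K, hK, hdecay⟩ := hA.exists_hasProductDecay
  have hKv : 0 ≤ Kv := (sum_nonneg fun _ _ => abs_nonneg _).trans (hv 0)
  refine ⟨(K * Kv * Kw) ^ 2 * (2 / (2 * p - 1)) / (1 - p) ^ (2 - 1 / (2 * p))
    * ∑' i : ℕ, ((i + 1 : ℕ) : ℝ) ^ (1 / 2 - 2 * p), fun n n' hn' => ?_⟩
  have hF : HasProductDecay (fCoef d c n (v n) (w n)) (K * Kv * Kw) p :=
    (hdecay n (v n) (w n)).mono (by gcongr; exacts [hv n, hw n])
  have h := hF.tsum_tsum_sq_tail_sub_tail_le (by linarith) (by linarith) hn'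
  rwa [show 5 / 2 - 2 * p = 1 - θ by ring] at h

end
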